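/- Let x be a generic input point of the ReLU MLP with weights (H_1, …, H_L), and fix a hidden layer index l with 2 ≤ l ≤ L−1 and output/input indices i, j. Then there exists a neighborhood U of H_l in the space of n_l × n_{l-1} real matrices such that for every H ∈ U, the ReLU MLP obtained by replacing the l-th weight matrix H_l by H (keeping all other weights fixed) is Fréchet differentiable at x and the (i, j) entry of its Jacobian at x equals S_l^i ⬝ᵥ (H *ᵥ P_l^j), where P_l^j and S_l^i are computed from the original weights at x. -/

import Mathlib

noncomputable section

/-- Componentwise ReLU. -/
def relu {m : ℕ} (v : Fin m → ℝ) : Fin m → ℝ := fun i => max (v i) 0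

/-- Pre-activations of the ReLU MLP: `preact n H x l` is the paper's `a_{l+1}`,
i.e. `a_1 = H_1 x` is `preact n H x 0`, and `a_{l+1} = H_{l+1} g(a_l)`. -/
def preact (n : ℕ → ℕ) (H : (l : ℕ) → Matrix (Fin (n (l + 1))) (Fin (n l)) ℝ)
    (x : Fin (n 0) → ℝ) : (l : ℕ) → Fin (n (l + 1)) → ℝ
  | 0 => (H 0).mulVec x
  | l + 1 => (H (l + 1)).mulVec (relu (preact n H x l))

/-- Activation-pattern matrix: `Gmat n H x l` is the paper's `G_{l+2}`, the diagonal
matrix recording the sign pattern of the pre-activation `preact n H x l`. -/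
def Gmat (n : ℕ → ℕ) (H : (l : ℕ) → Matrix (Fin (n (l + 1))) (Fin (n l)) ℝ)
    (x : Fin (n 0) → ℝ) (l : ℕ) : Matrix (Fin (n (l + 1))) (Fin (n (l + 1))) ℝ :=
  Matrix.diagonal fun i => if 0 < preact n H x l i then (1 : ℝ) else 0

/-- The alternating matrix product `jacProd n H x l = H_{l+1} G_{l+1} H_l ⋯ G_2 H_1`. -/
def jacProd (n : ℕ → ℕ) (H : (l : ℕ) → Matrix (Fin (n (l + 1))) (Fin (n l)) ℝ)
    (x : Fin (n 0) → ℝ) : (l : ℕ) → Matrix (Fin (n (l + 1))) (Fin (n 0)) ℝ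
  | 0 => H 0
  | l + 1 => H (l + 1) * Gmat n H x l * jacProd n H x l

end

noncomputable section

/-- The tail matrix product `H_L G_L H_{L-1} ⋯ H_{l+1} G_{l+1}` of the paper, for a
network with `L = s + c + 3` layers and `l = s + 2`:
`tailProd n H x s c = (H (s+c+2) * Gmat (s+c+1)) * ⋯ * (H (s+2) * Gmat (s+1))`. -/
def tailProd (n : ℕ → ℕ) (H : (l : ℕ) → Matrix (Fin (n (l + 1))) (Fin (n l)) ℝ)
    (x : Fin (n 0) → ℝ) (s : ℕ) :
    (c : ℕ) → Matrix (Fin (n (s + c + 3))) (Fin (n (s + 2))) ℝ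
  | 0 => H (s + 2) * Gmat n H x (s + 1)
  | c + 1 => H (s + c + 3) * Gmat n H x (s + c + 2) * tailProd n H x s c

end

/-!
At a generic input every pre-activation is nonzero, so near it each ReLU layer acts as the fixed
diagonal 0/1 matrix of its sign pattern, and the chain rule makes the Jacobian of the network the
alternating product `H_L G_L ⋯ G_2 H_1`. The pre-activations at `x` depend continuously on the
weights, so replacing `H_l` by a nearby `K` keeps every sign pattern, and the only factor of that
product that changes is `H_l`, which becomes `K`.
-/

open Matrix Filter Topology

lemma Filter.Tendsto.eventually_mul_pos {α : Type*} {l : Filter α} {f : α → ℝ} {a : ℝ}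
    (hf : Tendsto f l (𝓝 a)) (ha : a ≠ 0) : ∀ᶠ y in l, 0 < f y * a :=
  (hf.mul tendsto_const_nhds).eventually (eventually_gt_nhds (mul_self_pos.2 ha))

lemma relu_eventuallyEq_mulVec_diagonal {m : ℕ} {a : Fin m → ℝ} (ha : ∀ i, a i ≠ 0) :
    relu =ᶠ[𝓝 a] (diagonal (fun i => if 0 < a i then (1 : ℝ) else 0) *ᵥ ·) := by
  have hsign : ∀ᶠ v in 𝓝 a, ∀ i, (0 < v i ↔ 0 < a i) :=
    eventually_all.2 fun i => ((continuous_apply i).tendsto a).eventually_mul_pos (ha i)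
      |>.mono fun _ => pos_iff_pos_of_mul_pos
  filter_upwards [hsign] with v hv
  funext i
  by_cases hi : 0 < a i
  · simp [relu, mulVec_diagonal, hi, ((hv i).2 hi).le]
  · simp [relu, mulVec_diagonal, hi, not_lt.1 (mt (hv i).1 hi)]

lemma hasFDerivAt_relu {m : ℕ} {a : Fin m → ℝ} (ha : ∀ i, a i ≠ 0) :
    HasFDerivAt relu (LinearMap.toContinuousLinearMap
      (diagonal fun i => if 0 < a i then (1 : ℝ) else 0).mulVecLin) a :=
  (LinearMap.toContinuousLinearMap _).hasFDerivAt.congr_of_eventuallyEq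
    (relu_eventuallyEq_mulVec_diagonal ha)

lemma continuous_relu {m : ℕ} : Continuous (relu (m := m)) :=
  continuous_pi fun i => (continuous_apply i).max continuous_const

section Network

variable (n : ℕ → ℕ)

lemma continuous_preact_weights (x : Fin (n 0) → ℝ) (l : ℕ) :
    Continuous fun H : (l : ℕ) → Matrix (Fin (n (l + 1))) (Fin (n l)) ℝ => preact n H x l := by
  induction l with
  | zero => exact (continuous_apply 0).matrix_mulVec continuous_const
  | succ l ih => exact (continuous_apply (l + 1)).matrix_mulVec (continuous_relu.comp ih)

variable (H : (l : ℕ) → Matrix (Fin (n (l + 1))) (Fin (n l)) ℝ) (x : Fin (n 0) → ℝ)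

lemma hasFDerivAt_preact (m : ℕ) (hx : ∀ l < m, ∀ i, preact n H x l i ≠ 0) :
    HasFDerivAt (fun u => preact n H u m)
      (LinearMap.toContinuousLinearMap (jacProd n H x m).mulVecLin) x := by
  induction m with
  | zero => exact (LinearMap.toContinuousLinearMap (H 0).mulVecLin).hasFDerivAt
  | succ m ih =>
    have hrelu := (hasFDerivAt_relu (hx m m.lt_succ_self)).comp x
      (ih fun l hl => hx l (hl.trans m.lt_succ_self))
    refine ((LinearMap.toContinuousLinearMap (H (m + 1)).mulVecLin).hasFDerivAt.comp x
      hrelu).congr_fderiv ?_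
    ext v k
    simp [jacProd, Gmat, Matrix.mulVec_mulVec]

lemma Gmat_congr {H' : (l : ℕ) → Matrix (Fin (n (l + 1))) (Fin (n l)) ℝ} {l : ℕ}
    (h : ∀ i, (0 < preact n H' x l i ↔ 0 < preact n H x l i)) :
    Gmat n H' x l = Gmat n H x l := by
  simp only [Gmat, h]

variable {k : ℕ}

lemma eventually_preact_update_mul_pos (l : ℕ) (hx : ∀ i, preact n H x l i ≠ 0) :
    ∀ᶠ K in 𝓝 (H k), ∀ i, 0 < preact n (Function.update H k K) x l i * preact n H x l i := by
  have hcont : Continuous fun K => preact n (Function.update H k K) x l :=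
    (continuous_preact_weights n x l).comp (continuous_const.update k continuous_id)
  refine eventually_all.2 fun i => ?_
  have hlim := ((continuous_apply i).comp hcont).tendsto (H k)
  simp only [Function.comp_def, Function.update_eq_self] at hlim
  exact hlim.eventually_mul_pos (hx i)

variable (K : Matrix (Fin (n (k + 1))) (Fin (n k)) ℝ)

lemma preact_update_of_lt {l : ℕ} (hl : l < k) :
    preact n (Function.update H k K) x l = preact n H x l := by
  induction l with
  | zero => simp [preact, Function.update_of_ne hl.ne]
  | succ l ih => simp [preact, Function.update_of_ne hl.ne, ih (by omega)]

lemma jacProd_update_of_lt {l : ℕ} (hl : l < k) :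
    jacProd n (Function.update H k K) x l = jacProd n H x l := by
  induction l with
  | zero => simp [jacProd, Function.update_of_ne hl.ne]
  | succ l ih =>
    simp [jacProd, Gmat, Function.update_of_ne hl.ne, ih (by omega),
      preact_update_of_lt n H x K (by omega : l < k)]

end Network

section TailProduct

variable (n : ℕ → ℕ) (H : (l : ℕ) → Matrix (Fin (n (l + 1))) (Fin (n l)) ℝ) (x : Fin (n 0) → ℝ)
  (s : ℕ) (K : Matrix (Fin (n (s + 2))) (Fin (n (s + 1))) ℝ)

lemma jacProd_update_succ_self :
    jacProd n (Function.update H (s + 1) K) x (s + 1) = K * (Gmat n H x s * jacProd n H x s) := by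
  simp only [jacProd, Gmat, Function.update_self, Matrix.mul_assoc,
    preact_update_of_lt n H x K s.lt_succ_self, jacProd_update_of_lt n H x K s.lt_succ_self]

lemma jacProd_update_eq_tailProd_mul (c : ℕ)
    (hG : ∀ l ≤ s + c + 1, Gmat n (Function.update H (s + 1) K) x l = Gmat n H x l) :
    jacProd n (Function.update H (s + 1) K) x (s + c + 2) =
      tailProd n H x s c * (K * (Gmat n H x s * jacProd n H x s)) := by
  induction c with
  | zero =>
    rw [jacProd, Function.update_of_ne (by omega), hG (s + 1) (by omega),
      jacProd_update_succ_self, tailProd]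
  | succ c ih =>
    rw [jacProd, Function.update_of_ne (by omega), hG (s + (c + 1) + 1) le_rfl, tailProd,
      Matrix.mul_assoc (H (s + c + 3) * _)]
    exact congrArg (H (s + c + 3) * Gmat n H x (s + c + 2) * ·) (ih fun l hl => hG l (by omega))

end TailProduct

open Matrix in
theorem mlp_perturbed_jacobian_entry_general (s c : ℕ) (n : ℕ → ℕ)
    (H : (l : ℕ) → Matrix (Fin (n (l + 1))) (Fin (n l)) ℝ)
    (x : Fin (n 0) → ℝ)
    (hx : ∀ l ≤ s + c + 1, ∀ i, preact n H x l i ≠ 0)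
    (i : Fin (n (s + c + 3))) (j : Fin (n 0)) :
    ∃ U ∈ nhds (H (s + 1)), ∀ K ∈ U,
      DifferentiableAt ℝ
        (fun u : Fin (n 0) → ℝ =>
          preact n (Function.update H (s + 1) K) u (s + c + 2)) x ∧
      fderiv ℝ
          (fun u : Fin (n 0) → ℝ =>
            preact n (Function.update H (s + 1) K) u (s + c + 2)) x
          (Pi.single j 1) i =
        (fun a => tailProd n H x s c i a) ⬝ᵥ
          K.mulVec ((Gmat n H x s).mulVec fun b => jacProd n H x s b j) := by
  have hpattern : ∀ᶠ K in 𝓝 (H (s + 1)), ∀ l ∈ Set.Iic (s + c + 1), ∀ i,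
      0 < preact n (Function.update H (s + 1) K) x l i * preact n H x l i :=
    (Set.finite_Iic _).eventually_all.2 fun l hl =>
      eventually_preact_update_mul_pos n H x l (hx l hl)
  refine eventually_iff_exists_mem.1 ?_
  filter_upwards [hpattern] with K hK
  have hG : ∀ l ≤ s + c + 1, Gmat n (Function.update H (s + 1) K) x l = Gmat n H x l :=
    fun l hl => Gmat_congr n H x fun i => pos_iff_pos_of_mul_pos (hK l hl i)
  have hderiv := hasFDerivAt_preact n (Function.update H (s + 1) K) x (s + c + 2)
    fun l hl i => left_ne_zero_of_mul (hK l (by simp only [Set.mem_Iic]; omega) i).ne'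
  refine ⟨hderiv.differentiableAt, ?_⟩
  rw [hderiv.fderiv, jacProd_update_eq_tailProd_mul n H x s K c hG]
  simp only [LinearMap.coe_toContinuousLinearMap', mulVecLin_apply, mulVec_single_one]
  rfl

open Matrix in
/-- Let `x` be a generic input of the ReLU MLP with `L = s + c + 3 ≥ 3`
layers `H 0, …, H (s+c+2)` (the paper's `H_1, …, H_L`), and consider the hidden layer
with paper index `l = s + 2` (so `2 ≤ l ≤ L - 1`), whose weight matrix is `H (s+1)`.
Then for every matrix `K` in some neighborhood of `H (s+1)`, the MLP obtained by
replacing the `l`-th weight matrix by `K` is Fréchet differentiable at `x` and the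
`(i, j)` entry of its Jacobian at `x` equals `S_l^i ⬝ᵥ (K *ᵥ P_l^j)`, where
`P_l^j = G_l H_{l-1} ⋯ G_2 H_1^{(·,j)}` and `S_l^i = H_L^{(i,·)} G_L ⋯ H_{l+1} G_{l+1}`
are computed from the original weights at `x`. -/
theorem mlp_perturbed_jacobian_entry (s c : ℕ) (n : ℕ → ℕ) (hn : ∀ l, 0 < n l)
    (H : (l : ℕ) → Matrix (Fin (n (l + 1))) (Fin (n l)) ℝ)
    (x : Fin (n 0) → ℝ)
    (hx : ∀ l ≤ s + c + 1, ∀ i, preact n H x l i ≠ 0)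
    (i : Fin (n (s + c + 3))) (j : Fin (n 0)) :
    ∃ U ∈ nhds (H (s + 1)), ∀ K ∈ U,
      DifferentiableAt ℝ
        (fun u : Fin (n 0) → ℝ =>
          preact n (Function.update H (s + 1) K) u (s + c + 2)) x ∧
      fderiv ℝ
          (fun u : Fin (n 0) → ℝ =>
            preact n (Function.update H (s + 1) K) u (s + c + 2)) x
          (Pi.single j 1) i =
        (fun a => tailProd n H x s c i a) ⬝ᵥ
          K.mulVec ((Gmat n H x s).mulVec fun b => jacProd n H x s b j) :=
  mlp_perturbed_jacobian_entry_general s c n H x hx i j
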